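/- arXiv:2411.01832 — 3 statements merged into one kernel-verified Lean document; each statement's English description precedes it below -/
import Mathlib

section
/- For every positive integer i with i ≤ p^a, one has s_p(i·(p^a - 1)) = a(p-1). -/
/-- Sum of the base-`p` digits of `n`. -/
def digitSum (p n : ℕ) : ℕ := (Nat.digits p n).sum

lemma digitSum_add_base_mul {p : ℕ} (hp : 1 < p) (r q : ℕ) (hr : r < p) :
    digitSum p (r + p * q) = r + digitSum p q := by
  by_cases h : r = 0 ∧ q = 0
  · simp [h.1, h.2, digitSum]
  · have : r ≠ 0 ∨ q ≠ 0 := by tauto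
    unfold digitSum
    rw [Nat.digits_add p hp r q hr this]
    simp

lemma digitSum_complement {p : ℕ} (hp : 1 < p) :
    ∀ a j : ℕ, j < p ^ a →
      digitSum p j + digitSum p (p ^ a - 1 - j) = a * (p - 1) := by
  intro a
  induction a with
  | zero =>
    intro j hj
    have : j = 0 := by simpa using hj
    subst this
    simp [digitSum]
  | succ a ih =>
    intro j hj
    obtain ⟨q, r, hrp, rfl⟩ : ∃ q r, r < p ∧ j = r + p * q :=
      ⟨j / p, j % p, Nat.mod_lt _ (by omega), (Nat.mod_add_div j p).symm⟩
    have hP : 1 ≤ p ^ a := Nat.one_le_pow _ _ (by omega)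
    have h3 : p ^ (a + 1) = p * p ^ a := pow_succ' p a
    have hq' : p * q < p * p ^ a := by omega
    have hqP : q < p ^ a := Nat.lt_of_mul_lt_mul_left hq'
    have h1 : p * (p ^ a - 1 - q) + p * q = p * (p ^ a - 1) := by
      rw [← Nat.mul_add]
      congr 1
      omega
    have h2 : p * (p ^ a - 1) + p = p * p ^ a := by
      rw [← Nat.mul_succ]
      congr 1
      omega
    have key : p ^ (a + 1) - 1 - (r + p * q) = (p - 1 - r) + p * (p ^ a - 1 - q) := by
      omega
    rw [key, digitSum_add_base_mul hp r q hrp,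
      digitSum_add_base_mul hp _ _ (show p - 1 - r < p by omega)]
    have hc := ih (p ^ a - 1 - q) (by omega)
    have hih := ih q hqP
    have hlin : (a + 1) * (p - 1) = a * (p - 1) + (p - 1) := by ring
    omega

lemma digits_len_le_of_lt_pow {p : ℕ} (hp : 1 < p) {n a : ℕ} (hn : n < p ^ a) :
    (Nat.digits p n).length ≤ a := by
  by_cases h0 : n = 0
  · simp [h0]
  · have h1 : p ^ (Nat.digits p n).length ≤ p * n :=
      Nat.base_pow_length_digits_le p n hp h0
    have h2 : p * n < p ^ (a + 1) := by
      rw [pow_succ']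
      exact Nat.mul_lt_mul_of_le_of_lt (le_refl p) hn (by omega)
    have h4 := lt_of_le_of_lt h1 h2
    have := (Nat.pow_lt_pow_iff_right hp).mp h4
    omega

lemma digitSum_add_pow_mul {p : ℕ} (hp : 1 < p) {n a : ℕ} (m : ℕ) (hn : n < p ^ a) :
    digitSum p (n + p ^ a * m) = digitSum p n + digitSum p m := by
  rcases Nat.eq_zero_or_pos m with rfl | hm
  · simp [digitSum]
  · have hlen : (Nat.digits p n).length ≤ a := digits_len_le_of_lt_pow hp hn
    obtain ⟨k, hk⟩ := Nat.le.dest hlen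
    unfold digitSum
    rw [← hk, ← Nat.digits_append_zeroes_append_digits hp hm]
    simp

theorem digitSum_mul_pow_sub_one (p a i : ℕ) (hp : p.Prime) (ha : 1 ≤ a)
    (hi : 0 < i) (hia : i ≤ p ^ a) :
    digitSum p (i * (p ^ a - 1)) = a * (p - 1) := by
  have hp1 : 1 < p := hp.one_lt
  have hP : 1 ≤ p ^ a := Nat.one_le_pow _ _ (by omega)
  obtain ⟨m, rfl⟩ : ∃ m, i = m + 1 := ⟨i - 1, by omega⟩
  have hmP : m < p ^ a := by omega
  have h1 : p ^ a * m + p ^ a = p ^ a * (m + 1) := by rw [← Nat.mul_succ]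
  have h2 : (m + 1) * (p ^ a - 1) + (m + 1) = (m + 1) * p ^ a := by
    rw [← Nat.mul_succ]
    congr 1
    omega
  have h3 : p ^ a * (m + 1) = (m + 1) * p ^ a := Nat.mul_comm _ _
  have key : (m + 1) * (p ^ a - 1) = (p ^ a - 1 - m) + p ^ a * m := by omega
  rw [key, digitSum_add_pow_mul hp1 m (show p ^ a - 1 - m < p ^ a by omega)]
  have hc := digitSum_complement hp1 a m hmP
  omega
end

section
/- Let C = {i·p^j : i ∈ S, 0 ≤ j ≤ a-1} where S is a finite set of positive integers coprime to p, and let ν ∈ S have maximal p-adic digit sum among elements of S. Then for every nonnegative integer N that can be represented as a nonnegative-integer combination of elements of C, the minimal number M_C(N) of coins (with repetition) from C summing to N satisfies M_C(N) ≥ s_p(N)/s_p(ν). -/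
/-- `IsRepr p a S N m` : `N` can be written as a sum of `m` coins (with repetition)
from the coin set `{i * p^j : i ∈ S, 0 ≤ j ≤ a-1}`. -/
def IsRepr (p a : ℕ) (S : Finset ℕ) (N m : ℕ) : Prop :=
  ∃ t : ℕ → ℕ → ℕ,
    (∑ i ∈ S, ∑ j ∈ Finset.range a, t i j * (i * p ^ j)) = N ∧
    (∑ i ∈ S, ∑ j ∈ Finset.range a, t i j) = m

/-- The minimal number of coins from the coin set needed to sum to `N`. -/
noncomputable def MC (p a : ℕ) (S : Finset ℕ) (N : ℕ) : ℕ :=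
  sInf {m | IsRepr p a S N m}

lemma digitSum_eq (p n : ℕ) (hp : 1 < p) :
    digitSum p n = n % p + digitSum p (n / p) := by
  rcases Nat.eq_zero_or_pos n with rfl | hn
  · simp [digitSum]
  · unfold digitSum
    rw [Nat.digits_def' hp hn, List.sum_cons]

lemma digitSum_succ_le (p : ℕ) (hp : 1 < p) (n : ℕ) :
    digitSum p (n + 1) ≤ digitSum p n + 1 := by
  induction n using Nat.strong_induction_on with
  | _ n ih =>
    rw [digitSum_eq p n hp, digitSum_eq p (n + 1) hp]
    have hmod : (n + 1) % p = (n % p + 1) % p := by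
      conv_lhs => rw [Nat.add_mod, Nat.mod_eq_of_lt hp]
    have hdvd : p ∣ n + 1 ↔ (n + 1) % p = 0 := Nat.dvd_iff_mod_eq_zero
    rcases Nat.lt_or_ge (n % p + 1) p with h | h
    · have h1 : (n + 1) % p = n % p + 1 := by rw [hmod, Nat.mod_eq_of_lt h]
      have h2 : (n + 1) / p = n / p := by
        rw [Nat.succ_div, if_neg (by rw [hdvd, h1]; omega)]; omega
      rw [h1, h2]; omega
    · have hnp : n % p = p - 1 := by have := Nat.mod_lt n (show 0 < p by omega); omega
      have h1 : (n + 1) % p = 0 := by rw [hmod]; have : n % p + 1 = p := by omega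
                                      rw [this, Nat.mod_self]
      have h2 : (n + 1) / p = n / p + 1 := by
        rw [Nat.succ_div, if_pos (hdvd.mpr h1)]
      rw [h1, h2]
      have hlt : n / p < n := by
        have hn : 0 < n := by
          rcases Nat.eq_zero_or_pos n with rfl | hn
          · simp at hnp; omega
          · exact hn
        exact Nat.div_lt_self hn hp
      have := ih (n / p) hlt
      omega

lemma digitSum_add_le (p : ℕ) (hp : 1 < p) (x y : ℕ) :
    digitSum p (x + y) ≤ digitSum p x + digitSum p y := by
  have key : ∀ n x y : ℕ, x + y = n →
      digitSum p (x + y) ≤ digitSum p x + digitSum p y := by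
    intro n
    induction n using Nat.strong_induction_on with
    | _ n ih =>
      intro x y hxy
      rcases Nat.eq_zero_or_pos (x + y) with h0 | hpos
      · have hx : x = 0 := by omega
        have hy : y = 0 := by omega
        subst hx; subst hy; simp
      rw [digitSum_eq p x hp, digitSum_eq p y hp, digitSum_eq p (x + y) hp]
      have hxm := Nat.mod_lt x (show 0 < p by omega)
      have hym := Nat.mod_lt y (show 0 < p by omega)
      have hmod : (x + y) % p = (x % p + y % p) % p := Nat.add_mod x y p
      have hdiv : (x + y) / p = x / p + y / p + if p ≤ x % p + y % p then 1 else 0 :=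
        Nat.add_div (by omega)
      have hdlt : x / p + y / p < n := by
        rcases Nat.eq_zero_or_pos x with rfl | hx
        · simp only [Nat.zero_div, zero_add]
          have : y / p < y := Nat.div_lt_self (by omega) hp
          omega
        · have h1 : x / p < x := Nat.div_lt_self hx hp
          have h2 : y / p ≤ y := Nat.div_le_self y p
          omega
      rcases Nat.lt_or_ge (x % p + y % p) p with h | h
      · have h1 : (x + y) % p = x % p + y % p := by rw [hmod, Nat.mod_eq_of_lt h]
        have h2 : (x + y) / p = x / p + y / p := by rw [hdiv, if_neg (by omega)]; omega
        rw [h1, h2]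
        have := ih (x / p + y / p) hdlt (x / p) (y / p) rfl
        omega
      · have h1 : (x + y) % p = x % p + y % p - p := by
          rw [hmod, Nat.mod_eq_sub_mod h, Nat.mod_eq_of_lt (by omega)]
        have h2 : (x + y) / p = x / p + y / p + 1 := by rw [hdiv, if_pos h]
        rw [h1, h2]
        have h3 := digitSum_succ_le p hp (x / p + y / p)
        have h4 := ih (x / p + y / p) hdlt (x / p) (y / p) rfl
        omega
  exact key (x + y) x y rfl

lemma digitSum_sum_le (p : ℕ) (hp : 1 < p) {α : Type*} (s : Finset α) (f : α → ℕ) :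
    digitSum p (∑ x ∈ s, f x) ≤ ∑ x ∈ s, digitSum p (f x) := by
  induction s using Finset.cons_induction with
  | empty => simp [digitSum]
  | cons a s ha ih =>
    rw [Finset.sum_cons, Finset.sum_cons]
    exact le_trans (digitSum_add_le p hp _ _) (by omega)

lemma digitSum_nsmul_le (p : ℕ) (hp : 1 < p) (t c : ℕ) :
    digitSum p (t * c) ≤ t * digitSum p c := by
  induction t with
  | zero => simp [digitSum]
  | succ t ih =>
    rw [Nat.succ_mul, Nat.succ_mul]
    exact le_trans (digitSum_add_le p hp _ _) (by omega)

lemma digitSum_mul_pow (p : ℕ) (hp : 1 < p) (i j : ℕ) (hi : 0 < i) :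
    digitSum p (i * p ^ j) = digitSum p i := by
  unfold digitSum
  rw [mul_comm, Nat.digits_base_pow_mul hp hi]
  simp

theorem keyLemma_lower_bound (p a : ℕ) (hp : p.Prime) (ha : 1 ≤ a)
    (S : Finset ℕ) (hS : ∀ i ∈ S, 0 < i ∧ Nat.Coprime i p)
    (ν : ℕ) (hν : ν ∈ S) (hmax : ∀ i ∈ S, digitSum p i ≤ digitSum p ν)
    (N : ℕ) (hrep : ∃ m, IsRepr p a S N m) :
    digitSum p N ≤ digitSum p ν * MC p a S N := by
  have hp1 : 1 < p := hp.one_lt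
  have hne : {m | IsRepr p a S N m}.Nonempty := hrep
  have hmem : IsRepr p a S N (MC p a S N) := Nat.sInf_mem hne
  obtain ⟨t, hsum, hcount⟩ := hmem
  calc digitSum p N
      = digitSum p (∑ i ∈ S, ∑ j ∈ Finset.range a, t i j * (i * p ^ j)) := by rw [hsum]
    _ ≤ ∑ i ∈ S, digitSum p (∑ j ∈ Finset.range a, t i j * (i * p ^ j)) :=
        digitSum_sum_le p hp1 _ _
    _ ≤ ∑ i ∈ S, ∑ j ∈ Finset.range a, digitSum p (t i j * (i * p ^ j)) :=
        Finset.sum_le_sum fun i _ => digitSum_sum_le p hp1 _ _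
    _ ≤ ∑ i ∈ S, ∑ j ∈ Finset.range a, t i j * digitSum p ν := by
        refine Finset.sum_le_sum fun i hi => Finset.sum_le_sum fun j _ => ?_
        calc digitSum p (t i j * (i * p ^ j))
            ≤ t i j * digitSum p (i * p ^ j) := digitSum_nsmul_le p hp1 _ _
          _ = t i j * digitSum p i := by rw [digitSum_mul_pow p hp1 i j (hS i hi).1]
          _ ≤ t i j * digitSum p ν := Nat.mul_le_mul_left _ (hmax i hi)
    _ = digitSum p ν * MC p a S N := by
        rw [← hcount]
        simp [Finset.sum_mul, Finset.mul_sum, Nat.mul_comm]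
end

section
/- If ν is p-symmetric, witnessed by a carry-free product ν·w = (p^k - 1)·ℓ with ℓ < p^k, then for every integer b ≥ 1 the number ν·(1 + p^k + p^{2k} + ... + p^{(b-1)k}) is also p-symmetric. -/
/-- An integer `ν > 1` coprime to `p` is `p`-symmetric if there exist positive
integers `w`, `k`, `ℓ` with `ℓ < p^k` such that `ν * w = (p^k - 1) * ℓ` and the
base-`p` product `ν * w` is carry-free, i.e. `s_p(ν*w) = s_p(ν) * s_p(w)`. -/
def IsPSymmetric (p ν : ℕ) : Prop :=
  1 < ν ∧ Nat.Coprime ν p ∧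
    ∃ w k ℓ : ℕ, 0 < w ∧ 0 < k ∧ 0 < ℓ ∧ ℓ < p ^ k ∧
      ν * w = (p ^ k - 1) * ℓ ∧
      digitSum p (ν * w) = digitSum p ν * digitSum p w

lemma ds_zero (p : ℕ) : digitSum p 0 = 0 := by simp [digitSum]

lemma ds_step (p y r : ℕ) (hp : 2 ≤ p) (hr : r < p) :
    digitSum p (p * y + r) = r + digitSum p y := by
  rcases Nat.eq_zero_or_pos (p * y + r) with h | h
  · have hy : y = 0 := by
      rcases Nat.add_eq_zero.mp h with ⟨h1, -⟩
      exact (Nat.mul_eq_zero.mp h1).resolve_left (by omega)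
    have hr0 : r = 0 := by omega
    simp [hy, hr0, ds_zero]
  · rw [digitSum, Nat.digits_def' (by omega : 1 < p) h]
    have h1 : (p * y + r) % p = r := by rw [Nat.mul_add_mod]; exact Nat.mod_eq_of_lt hr
    have h2 : (p * y + r) / p = y := by
      rw [Nat.mul_add_div (by omega : 0 < p), Nat.div_eq_of_lt hr]
      omega
    rw [h1, h2]
    simp [digitSum]

lemma ds_eq (p m : ℕ) (hp : 2 ≤ p) : digitSum p m = m % p + digitSum p (m / p) := by
  conv_lhs => rw [← Nat.div_add_mod m p]
  exact ds_step p (m / p) (m % p) hp (Nat.mod_lt _ (by omega))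

lemma ds_add_le (p : ℕ) (hp : 2 ≤ p) : ∀ N m n, m + n ≤ N →
    digitSum p (m + n) ≤ digitSum p m + digitSum p n := by
  intro N
  induction N using Nat.strong_induction_on with
  | _ N ih =>
    intro m n hmn
    rcases Nat.eq_zero_or_pos m with hm | hm
    · simp [hm]
    rcases Nat.eq_zero_or_pos n with hn | hn
    · simp [hn]
    have hm' : m = p * (m / p) + m % p := (Nat.div_add_mod m p).symm
    have hn' : n = p * (n / p) + n % p := (Nat.div_add_mod n p).symm
    have hr1 : m % p < p := Nat.mod_lt _ (by omega)
    have hr2 : n % p < p := Nat.mod_lt _ (by omega)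
    have hm1 : m / p < m := Nat.div_lt_self hm (by omega)
    have hn1 : n / p ≤ n := Nat.div_le_self n p
    have hNpos : 0 < N := by omega
    rcases lt_or_ge (m % p + n % p) p with hc | hc
    · have e : m + n = p * (m / p + n / p) + (m % p + n % p) := by
        rw [mul_add]; omega
      rw [e, ds_step p _ _ hp hc]
      have h1 : digitSum p (m / p + n / p) ≤ digitSum p (m / p) + digitSum p (n / p) :=
        ih (N - 1) (by omega) _ _ (by omega)
      rw [ds_eq p m hp, ds_eq p n hp]
      omega
    · have hC : p * (m / p + n / p + 1) = p * (m / p) + p * (n / p) + p := by ring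
      have e : m + n = p * (m / p + n / p + 1) + (m % p + n % p - p) := by omega
      have hbig : 2 * (m / p + n / p + 1) ≤ m + n := by
        have : 2 * (m / p + n / p + 1) ≤ p * (m / p + n / p + 1) :=
          Nat.mul_le_mul_right _ hp
        omega
      rw [e, ds_step p _ _ hp (by omega)]
      have h1 : digitSum p (m / p + n / p + 1) ≤ digitSum p (m / p + n / p) + digitSum p 1 :=
        ih (N - 1) (by omega) _ _ (by omega)
      have h2 : digitSum p (m / p + n / p) ≤ digitSum p (m / p) + digitSum p (n / p) :=
        ih (N - 1) (by omega) _ _ (by omega)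
      have h3 : digitSum p 1 = 1 := by
        have := ds_step p 0 1 hp (by omega)
        simpa [ds_zero] using this
      rw [ds_eq p m hp, ds_eq p n hp]
      omega

lemma ds_add_le' (p m n : ℕ) (hp : 2 ≤ p) :
    digitSum p (m + n) ≤ digitSum p m + digitSum p n :=
  ds_add_le p hp (m + n) m n le_rfl

lemma ds_p_mul (p x : ℕ) (hp : 2 ≤ p) : digitSum p (p * x) = digitSum p x := by
  have := ds_step p x 0 hp (by omega)
  simpa using this

lemma ds_smul_le (p : ℕ) (hp : 2 ≤ p) (r m : ℕ) :
    digitSum p (r * m) ≤ r * digitSum p m := by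
  induction r with
  | zero => simp [ds_zero]
  | succ r ih =>
    have : (r + 1) * m = r * m + m := by ring
    rw [this]
    calc digitSum p (r * m + m) ≤ digitSum p (r * m) + digitSum p m := ds_add_le' p _ _ hp
      _ ≤ r * digitSum p m + digitSum p m := by omega
      _ = (r + 1) * digitSum p m := by ring

lemma ds_mul_le (p : ℕ) (hp : 2 ≤ p) : ∀ n m, digitSum p (m * n) ≤ digitSum p m * digitSum p n := by
  intro n
  induction n using Nat.strong_induction_on with
  | _ n ih =>
    intro m
    rcases Nat.eq_zero_or_pos n with hn | hn
    · simp [hn, ds_zero]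
    have e : m * n = m * (n % p) + p * (m * (n / p)) := by
      conv_lhs => rw [← Nat.div_add_mod n p]
      ring
    calc digitSum p (m * n) = digitSum p (m * (n % p) + p * (m * (n / p))) := by rw [e]
      _ ≤ digitSum p (m * (n % p)) + digitSum p (p * (m * (n / p))) := ds_add_le' p _ _ hp
      _ = digitSum p (m * (n % p)) + digitSum p (m * (n / p)) := by rw [ds_p_mul p _ hp]
      _ ≤ (n % p) * digitSum p m + digitSum p m * digitSum p (n / p) := by
          have h1 : digitSum p (m * (n % p)) ≤ (n % p) * digitSum p m := by
            rw [mul_comm m]; exact ds_smul_le p hp _ _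
          have h2 := ih (n / p) (Nat.div_lt_self hn (by omega)) m
          omega
      _ = digitSum p m * (n % p + digitSum p (n / p)) := by ring
      _ = digitSum p m * digitSum p n := by rw [← ds_eq p n hp]

lemma ds_mul_pow (p m : ℕ) (hp : 2 ≤ p) : ∀ j, digitSum p (m * p ^ j) = digitSum p m := by
  intro j
  induction j with
  | zero => simp
  | succ j ih =>
    have : m * p ^ (j + 1) = p * (m * p ^ j) := by ring
    rw [this, ds_p_mul p _ hp, ih]

lemma ds_sum_le (p : ℕ) (hp : 2 ≤ p) (s : Finset ℕ) (f : ℕ → ℕ) :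
    digitSum p (∑ i ∈ s, f i) ≤ ∑ i ∈ s, digitSum p (f i) := by
  induction s using Finset.cons_induction with
  | empty => simp [ds_zero]
  | cons a s ha ih =>
    rw [Finset.sum_cons, Finset.sum_cons]
    calc digitSum p (f a + ∑ i ∈ s, f i)
        ≤ digitSum p (f a) + digitSum p (∑ i ∈ s, f i) := ds_add_le' p _ _ hp
      _ ≤ digitSum p (f a) + ∑ i ∈ s, digitSum p (f i) := by omega

lemma ds_compl (p : ℕ) (hp : 2 ≤ p) :
    ∀ m x, x < p ^ m → digitSum p x + digitSum p (p ^ m - 1 - x) = m * (p - 1) := by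
  intro m
  induction m with
  | zero =>
    intro x hx
    have hx0 : x = 0 := by simpa using hx
    subst hx0; simp [ds_zero]
  | succ m ih =>
    intro x hx
    have hx' : x / p < p ^ m := by
      rw [Nat.div_lt_iff_lt_mul (by omega : 0 < p)]
      calc x < p ^ (m + 1) := hx
        _ = p ^ m * p := by ring
    have hxm : x / p ≤ p ^ m - 1 := by omega
    have hr : x % p < p := Nat.mod_lt _ (by omega)
    have hpm : 1 ≤ p ^ m := Nat.one_le_pow _ _ (by omega)
    have key : p ^ (m + 1) - 1 - x = p * (p ^ m - 1 - x / p) + (p - 1 - x % p) := by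
      have h1 : p * (p ^ m - 1 - x / p) = p * p ^ m - p - p * (x / p) := by
        rw [Nat.mul_sub, Nat.mul_sub, Nat.mul_one]
      have h2 : x = p * (x / p) + x % p := (Nat.div_add_mod x p).symm
      have h3 : p ^ (m + 1) = p * p ^ m := by ring
      have h4 : p * (x / p) ≤ p * (p ^ m - 1) := Nat.mul_le_mul_left _ hxm
      have h5 : p * (p ^ m - 1) = p * p ^ m - p := by
        rw [Nat.mul_sub]; omega
      have h6 : p ≤ p * p ^ m := Nat.le_mul_of_pos_right p hpm
      omega
    rw [key, ds_step p _ _ hp (by omega), ds_eq p x hp]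
    have hih := ih (x / p) hx'
    have hmm : (m + 1) * (p - 1) = m * (p - 1) + (p - 1) := by ring
    omega

lemma ds_pred_pow_mul (p m ℓ : ℕ) (hp : 2 ≤ p) (h0 : 0 < ℓ) (hlt : ℓ < p ^ m) :
    digitSum p ((p ^ m - 1) * ℓ) = m * (p - 1) := by
  have hpm : 1 ≤ p ^ m := Nat.one_le_pow _ _ (by omega)
  -- block additivity : a + p^m * c with a < p^m
  have block : ∀ M a c, a < p ^ M → digitSum p (a + p ^ M * c) = digitSum p a + digitSum p c := by
    intro M
    induction M with
    | zero =>
      intro a c ha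
      have ha0 : a = 0 := by simpa using ha
      subst ha0; simp [ds_zero]
    | succ M ih =>
      intro a c ha
      have ha' : a / p < p ^ M := by
        rw [Nat.div_lt_iff_lt_mul (by omega : 0 < p)]
        calc a < p ^ (M + 1) := ha
          _ = p ^ M * p := by ring
      have e : a + p ^ (M + 1) * c = p * (a / p + p ^ M * c) + a % p := by
        have h2 : a = p * (a / p) + a % p := (Nat.div_add_mod a p).symm
        have h3 : p ^ (M + 1) * c = p * (p ^ M * c) := by ring
        have h4 : p * (a / p + p ^ M * c) = p * (a / p) + p * (p ^ M * c) := by ring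
        omega
      rw [e, ds_step p _ _ hp (Nat.mod_lt _ (by omega)), ih _ c ha', ds_eq p a hp]
      omega
  have key : (p ^ m - 1) * ℓ = (p ^ m - ℓ) + p ^ m * (ℓ - 1) := by
    have e1 : (p ^ m - 1) * ℓ = p ^ m * ℓ - ℓ := by
      rw [Nat.sub_mul, Nat.one_mul]
    have e2 : p ^ m * (ℓ - 1) = p ^ m * ℓ - p ^ m := by
      rw [Nat.mul_sub, Nat.mul_one]
    have e3 : ℓ ≤ p ^ m * ℓ := Nat.le_mul_of_pos_left _ (by omega)
    have e4 : p ^ m ≤ p ^ m * ℓ := Nat.le_mul_of_pos_right _ h0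
    omega
  rw [key, block m _ _ (by omega)]
  have hcompl := ds_compl p hp m (ℓ - 1) (by omega)
  have e2 : p ^ m - 1 - (ℓ - 1) = p ^ m - ℓ := by omega
  rw [e2] at hcompl
  omega

lemma geom_nat (q : ℕ) (hq : 1 ≤ q) :
    ∀ b, (q - 1) * ∑ i ∈ Finset.range b, q ^ i = q ^ b - 1 := by
  intro b
  induction b with
  | zero => simp
  | succ b ih =>
    rw [Finset.sum_range_succ, Nat.mul_add, ih]
    have h1 : (q - 1) * q ^ b = q * q ^ b - q ^ b := by
      rw [Nat.sub_mul]; omega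
    have h2 : q ^ (b + 1) = q * q ^ b := by ring
    have h3 : 1 ≤ q ^ b := Nat.one_le_pow _ _ (by omega)
    have h4 : q ^ b ≤ q * q ^ b := Nat.le_mul_of_pos_left _ (by omega)
    omega

theorem pSymmetric_mul_geom (p ν w k ℓ : ℕ) (hp : p.Prime)
    (h1 : 1 < ν) (hco : Nat.Coprime ν p)
    (hw : 0 < w) (hk : 0 < k) (hℓ : 0 < ℓ) (hℓlt : ℓ < p ^ k)
    (hfac : ν * w = (p ^ k - 1) * ℓ)
    (hcf : digitSum p (ν * w) = digitSum p ν * digitSum p w) :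
    ∀ b : ℕ, 1 ≤ b →
      IsPSymmetric p (ν * ∑ i ∈ Finset.range b, p ^ (i * k)) := by
  intro b hb
  have hp2 : 2 ≤ p := hp.two_le
  set S := ∑ i ∈ Finset.range b, p ^ (i * k) with hS
  have hq1 : 1 ≤ p ^ k := Nat.one_le_pow _ _ (by omega)
  have hSeq : S = ∑ i ∈ Finset.range b, (p ^ k) ^ i := by
    rw [hS]
    refine Finset.sum_congr rfl fun i _ => ?_
    rw [← pow_mul, mul_comm]
  have geo : (p ^ k - 1) * S = p ^ (b * k) - 1 := by
    rw [hSeq, geom_nat (p ^ k) hq1 b, ← pow_mul, mul_comm k b]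
  have hS1 : 1 ≤ S := by
    rw [hS]
    calc 1 = p ^ (0 * k) := by simp
      _ ≤ S := Finset.single_le_sum (f := fun i => p ^ (i * k))
          (fun i _ => Nat.zero_le _) (Finset.mem_range.mpr hb)
  have hkbk : k ≤ b * k := by calc k = 1 * k := (one_mul k).symm
                                _ ≤ b * k := Nat.mul_le_mul_right k hb
  have hℓlt' : ℓ < p ^ (b * k) := hℓlt.trans_le (Nat.pow_le_pow_right (by omega) hkbk)
  have hfac' : ν * S * w = (p ^ (b * k) - 1) * ℓ := by
    calc ν * S * w = (ν * w) * S := by ring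
      _ = (p ^ k - 1) * ℓ * S := by rw [hfac]
      _ = ((p ^ k - 1) * S) * ℓ := by ring
      _ = (p ^ (b * k) - 1) * ℓ := by rw [geo]
  refine ⟨?_, ?_, w, b * k, ℓ, hw, by positivity, hℓ, hℓlt', hfac', ?_⟩
  · calc 1 < ν := h1
      _ = ν * 1 := (mul_one ν).symm
      _ ≤ ν * S := Nat.mul_le_mul_left ν hS1
  · refine Nat.Coprime.mul hco ?_
    have hnd : ¬ p ∣ S := by
      intro hdvd
      have hsplit : S = p ^ (0 * k) + ∑ i ∈ Finset.Ico 1 b, p ^ (i * k) := by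
        rw [hS, Finset.range_eq_Ico, Finset.sum_eq_sum_Ico_succ_bot (by omega)]
      have htail : p ∣ ∑ i ∈ Finset.Ico 1 b, p ^ (i * k) := by
        refine Finset.dvd_sum fun i hi => ?_
        have hi1 : 1 ≤ i := (Finset.mem_Ico.mp hi).1
        exact dvd_pow_self p (by positivity)
      have h10 := Nat.dvd_sub hdvd htail
      have h11 : S - ∑ i ∈ Finset.Ico 1 b, p ^ (i * k) = 1 := by
        rw [hsplit]; simp
      rw [h11] at h10
      exact absurd (Nat.le_of_dvd one_pos h10) (by omega)
    exact (Nat.coprime_comm.mp (hp.coprime_iff_not_dvd.mpr hnd))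
  · -- digit sum condition
    have hC1 : digitSum p (ν * w) = k * (p - 1) := by
      rw [hfac]; exact ds_pred_pow_mul p k ℓ hp2 hℓ hℓlt
    have hC2 : digitSum p (ν * S * w) = (b * k) * (p - 1) := by
      rw [hfac']; exact ds_pred_pow_mul p (b * k) ℓ hp2 hℓ hℓlt'
    have hsw : digitSum p ν * digitSum p w = k * (p - 1) := by rw [← hcf, hC1]
    have hup : digitSum p (ν * S) ≤ b * digitSum p ν := by
      calc digitSum p (ν * S) = digitSum p (∑ i ∈ Finset.range b, ν * p ^ (i * k)) := by
            rw [hS, Finset.mul_sum]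
        _ ≤ ∑ i ∈ Finset.range b, digitSum p (ν * p ^ (i * k)) := ds_sum_le p hp2 _ _
        _ = ∑ i ∈ Finset.range b, digitSum p ν := by
            refine Finset.sum_congr rfl fun i _ => ds_mul_pow p ν hp2 (i * k)
        _ = b * digitSum p ν := by simp [Finset.sum_const, mul_comm]
    have hle1 : digitSum p (ν * S * w) ≤ digitSum p (ν * S) * digitSum p w :=
      ds_mul_le p hp2 w (ν * S)
    have hle2 : digitSum p (ν * S) * digitSum p w ≤ b * digitSum p ν * digitSum p w :=
      Nat.mul_le_mul_right _ hup
    have heq : b * digitSum p ν * digitSum p w = digitSum p (ν * S * w) := by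
      rw [hC2, mul_assoc, hsw]; ring
    exact le_antisymm hle1 (by omega)
end
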